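/- arXiv:2511.01396 — 2 statements merged into one kernel-verified Lean document; each statement's English description precedes it below -/
import Mathlib

section
/- Let G^C be a C-DAG, G_can its canonical compatible graph, and G_u its unfolded graph. Let σ be a structure of interest that is a subgraph of G_u. If the union G_can ∪ σ is acyclic, then G_can ∪ σ is an ADMG compatible with G^C. -/
/-!  Mixed graphs, ADMGs, d-separation, structures of interest, and cluster DAGs
(following Anand et al. and the cyclic C-DAG extension). -/

/-- The way an edge is traversed along a path: `fwd` = directed edge pointing
towards the right endpoint, `bwd` = directed edge pointing towards the left
endpoint, `both` = bidirected edge (arrowheads at both endpoints). -/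
inductive Link : Type
  | fwd
  | bwd
  | both
  deriving DecidableEq

/-- Is there an arrowhead at the right endpoint of the link? -/
def Link.headRight : Link → Bool
  | .fwd => true
  | .bwd => false
  | .both => true

/-- Is there an arrowhead at the left endpoint of the link? -/
def Link.headLeft : Link → Bool
  | .fwd => false
  | .bwd => true
  | .both => true

/-- A mixed graph on a vertex set `verts`: a set of directed edges and a
(symmetric) set of bidirected edges, all between vertices of `verts`. -/
structure MixedGraph (V : Type*) where
  verts : Set V
  dir : V → V → Prop
  bi : V → V → Prop
  dir_mem : ∀ ⦃a b : V⦄, dir a b → a ∈ verts ∧ b ∈ verts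
  bi_mem : ∀ ⦃a b : V⦄, bi a b → a ∈ verts ∧ b ∈ verts
  bi_symm : ∀ ⦃a b : V⦄, bi a b → bi b a

namespace MixedGraph

variable {V C : Type*}

/-- `G.Anc v w` : there is a directed path from `v` to `w`
(`v` is an ancestor of `w`, `w` a descendant of `v`). -/
def Anc (G : MixedGraph V) : V → V → Prop := Relation.ReflTransGen G.dir

/-- The set of ancestors of the set `Z` in `G`. -/
def AncSet (G : MixedGraph V) (Z : Set V) : Set V := {v | ∃ z ∈ Z, G.Anc v z}

/-- The directed part of `G` has no directed cycle. -/
def Acyclic (G : MixedGraph V) : Prop := ∀ ⦃a b : V⦄, G.dir a b → ¬ G.Anc b a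

/-- An acyclic directed mixed graph: no directed cycle, and all edges join
distinct vertices. -/
def IsADMG (G : MixedGraph V) : Prop :=
  G.Acyclic ∧ (∀ v, ¬ G.dir v v) ∧ (∀ v, ¬ G.bi v v)

/-- `H` is a subgraph of `G`. -/
def IsSubgraph (H G : MixedGraph V) : Prop :=
  H.verts ⊆ G.verts ∧ (∀ ⦃a b : V⦄, H.dir a b → G.dir a b) ∧
    (∀ ⦃a b : V⦄, H.bi a b → G.bi a b)

/-- Adjacency, viewing all edges as undirected. -/
def Adj (G : MixedGraph V) (a b : V) : Prop := G.dir a b ∨ G.dir b a ∨ G.bi a b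

/-- `G` has a single connected component (viewing all edges as undirected). -/
def Connected (G : MixedGraph V) : Prop :=
  G.verts.Nonempty ∧ ∀ a ∈ G.verts, ∀ b ∈ G.verts, Relation.ReflTransGen G.Adj a b

/-- A root: a vertex with no outgoing directed edge. -/
def IsRoot (G : MixedGraph V) (v : V) : Prop := v ∈ G.verts ∧ ∀ w, ¬ G.dir v w

/-- The set of roots of `G`. -/
def roots (G : MixedGraph V) : Set V := {v | G.IsRoot v}

/-- A structure of interest: an ADMG with a single connected component in which
every vertex has at most one outgoing directed edge, or exactly two outgoing
directed edges and no edge with an arrowhead at it. -/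
def IsSOI (σ : MixedGraph V) : Prop :=
  σ.IsADMG ∧ σ.Connected ∧
    ∀ v ∈ σ.verts,
      (∀ ⦃w₁ w₂ : V⦄, σ.dir v w₁ → σ.dir v w₂ → w₁ = w₂) ∨
      ((∃ w₁ w₂, w₁ ≠ w₂ ∧ σ.dir v w₁ ∧ σ.dir v w₂ ∧
          ∀ w, σ.dir v w → w = w₁ ∨ w = w₂) ∧
        (∀ w, ¬ σ.dir w v) ∧ (∀ w, ¬ σ.bi v w))

/-- A structure of interest `σ` (as a subgraph of the ambient graph) connects
`X` and `Y` under `Z`: it contains a vertex of `X` and a vertex of `Y`, its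
roots lie in `X ∪ Y ∪ Z`, and no non-root vertex of `σ` lies in `Z`. -/
def Connects (σ : MixedGraph V) (X Y Z : Set V) : Prop :=
  (σ.verts ∩ X).Nonempty ∧ (σ.verts ∩ Y).Nonempty ∧
    σ.roots ⊆ X ∪ Y ∪ Z ∧ ∀ v ∈ σ.verts, ¬ σ.IsRoot v → v ∉ Z

/-- The link `l` joins `a` (left) to `b` (right) in `G`. -/
def LinkOk (G : MixedGraph V) (a : V) (l : Link) (b : V) : Prop :=
  match l with
  | .fwd => G.dir a b
  | .bwd => G.dir b a
  | .both => G.bi a b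

/-- A walk from `a`, given as the list of successive (link, next vertex) steps. -/
inductive IsWalk (G : MixedGraph V) : V → List (Link × V) → Prop
  | nil (v : V) : IsWalk G v []
  | cons {a b : V} {l : Link} {rest : List (Link × V)} :
      G.LinkOk a l b → IsWalk G b rest → IsWalk G a ((l, b) :: rest)

/-- The vertices visited by a walk. -/
def pathVerts (a : V) (steps : List (Link × V)) : List V := a :: steps.map Prod.snd

/-- The last vertex of a walk. -/
def lastVert (a : V) (steps : List (Link × V)) : V := (steps.map Prod.snd).getLastD a

/-- A path: a walk visiting pairwise distinct vertices. -/
def IsPath (G : MixedGraph V) (a : V) (steps : List (Link × V)) : Prop :=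
  G.IsWalk a steps ∧ (pathVerts a steps).Nodup

/-- Activity of the interior vertex `v`, flanked by links `l₁` and `l₂`,
relative to `Z` : if `v` is a collider it must be an ancestor of `Z`
(in particular possibly in `Z`), otherwise it must avoid `Z`. -/
def ActiveTriple (G : MixedGraph V) (Z : Set V) (l₁ : Link) (v : V) (l₂ : Link) : Prop :=
  if l₁.headRight && l₂.headLeft then v ∈ G.AncSet Z else v ∉ Z

/-- `X` and `Y` are d-connected given `Z` in `G`: some path from a vertex of
`X` to a vertex of `Y` is active given `Z`. -/
def DConnected (G : MixedGraph V) (X Y Z : Set V) : Prop :=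
  ∃ (a : V) (steps : List (Link × V)),
    G.IsPath a steps ∧ a ∈ X ∧ lastVert a steps ∈ Y ∧
    a ∉ Z ∧ lastVert a steps ∉ Z ∧
    List.Chain' (fun s t => G.ActiveTriple Z s.1 s.2 t.1) steps

/-- The mutilated graph `G_{Ā,B̲}` : every edge with an arrowhead at a vertex
of `A` and every directed edge out of a vertex of `B` is deleted. -/
def mutilate (G : MixedGraph V) (A B : Set V) : MixedGraph V where
  verts := G.verts
  dir a b := G.dir a b ∧ b ∉ A ∧ a ∉ B
  bi a b := G.bi a b ∧ a ∉ A ∧ b ∉ A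
  dir_mem := fun _ _ h => G.dir_mem h.1
  bi_mem := fun _ _ h => G.bi_mem h.1
  bi_symm := fun _ _ h => ⟨G.bi_symm h.1, h.2.2, h.2.1⟩

/-- Union of two mixed graphs. -/
def union (G H : MixedGraph V) : MixedGraph V where
  verts := G.verts ∪ H.verts
  dir a b := G.dir a b ∨ H.dir a b
  bi a b := G.bi a b ∨ H.bi a b
  dir_mem := by
    rintro a b (h | h)
    · exact ⟨Or.inl (G.dir_mem h).1, Or.inl (G.dir_mem h).2⟩
    · exact ⟨Or.inr (H.dir_mem h).1, Or.inr (H.dir_mem h).2⟩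
  bi_mem := by
    rintro a b (h | h)
    · exact ⟨Or.inl (G.bi_mem h).1, Or.inl (G.bi_mem h).2⟩
    · exact ⟨Or.inr (H.bi_mem h).1, Or.inr (H.bi_mem h).2⟩
  bi_symm := by
    rintro a b (h | h)
    · exact Or.inl (G.bi_symm h)
    · exact Or.inr (H.bi_symm h)

/-- Add the directed edge `x → y`. -/
def addDir (G : MixedGraph V) (x y : V) : MixedGraph V where
  verts := G.verts ∪ {x, y}
  dir a b := G.dir a b ∨ (a = x ∧ b = y)
  bi := G.bi
  dir_mem := by
    rintro a b (h | ⟨rfl, rfl⟩)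
    · exact ⟨Or.inl (G.dir_mem h).1, Or.inl (G.dir_mem h).2⟩
    · exact ⟨Or.inr (by simp), Or.inr (by simp)⟩
  bi_mem := fun _ _ h => ⟨Or.inl (G.bi_mem h).1, Or.inl (G.bi_mem h).2⟩
  bi_symm := fun _ _ h => G.bi_symm h

/-- Add the bidirected edge `x ↔ y`. -/
def addBi (G : MixedGraph V) (x y : V) : MixedGraph V where
  verts := G.verts ∪ {x, y}
  dir := G.dir
  bi a b := G.bi a b ∨ (a = x ∧ b = y) ∨ (a = y ∧ b = x)
  dir_mem := fun _ _ h => ⟨Or.inl (G.dir_mem h).1, Or.inl (G.dir_mem h).2⟩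
  bi_mem := by
    rintro a b (h | ⟨rfl, rfl⟩ | ⟨rfl, rfl⟩)
    · exact ⟨Or.inl (G.bi_mem h).1, Or.inl (G.bi_mem h).2⟩
    · exact ⟨Or.inr (by simp), Or.inr (by simp)⟩
    · exact ⟨Or.inr (by simp), Or.inr (by simp)⟩
  bi_symm := by
    rintro a b (h | ⟨rfl, rfl⟩ | ⟨rfl, rfl⟩)
    · exact Or.inl (G.bi_symm h)
    · exact Or.inr (Or.inr ⟨rfl, rfl⟩)
    · exact Or.inr (Or.inl ⟨rfl, rfl⟩)

/-- Delete the directed edge `x → y`. -/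
def deleteDir (G : MixedGraph V) (x y : V) : MixedGraph V where
  verts := G.verts
  dir a b := G.dir a b ∧ ¬(a = x ∧ b = y)
  bi := G.bi
  dir_mem := fun _ _ h => G.dir_mem h.1
  bi_mem := fun _ _ h => G.bi_mem h
  bi_symm := fun _ _ h => G.bi_symm h

/-- Delete the bidirected edge `x ↔ y`. -/
def deleteBi (G : MixedGraph V) (x y : V) : MixedGraph V where
  verts := G.verts
  dir := G.dir
  bi a b := G.bi a b ∧ ¬((a = x ∧ b = y) ∨ (a = y ∧ b = x))
  dir_mem := fun _ _ h => G.dir_mem h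
  bi_mem := fun _ _ h => G.bi_mem h.1
  bi_symm := fun _ _ h => ⟨G.bi_symm h.1, fun hc => h.2 (by tauto)⟩

/-- The cluster of micro-variables assigned to the cluster label `c`. -/
def clusterOf (π : V → C) (c : C) : Set V := {v | π v = c}

/-- `G` (an ADMG on all of `V`) is compatible with the cluster-level mixed
graph `GC` : `GC` is exactly the cluster graph induced by `G` via the
partition `π`. -/
def Compatible (π : V → C) (GC : MixedGraph C) (G : MixedGraph V) : Prop :=
  G.IsADMG ∧ G.verts = Set.univ ∧
    (∀ c d, GC.dir c d ↔ ∃ a b, π a = c ∧ π b = d ∧ G.dir a b) ∧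
    (∀ c d, GC.bi c d ↔ ∃ a b, π a = c ∧ π b = d ∧ G.bi a b)

/-- Within each cluster, the indices of the vertices (given by the ambient
linear order on `V`) follow a topological order of `G`. -/
def FollowsTopo [LinearOrder V] (π : V → C) (G : MixedGraph V) : Prop :=
  ∃ t : V → ℕ, Function.Injective t ∧ (∀ ⦃a b : V⦄, G.dir a b → t a < t b) ∧
    ∀ ⦃a b : V⦄, π a = π b → a < b → t a < t b

/-- The cluster `c` has cardinality at most one. -/
def SingletonCluster (π : V → C) (c : C) : Prop :=
  ∀ ⦃a b : V⦄, π a = c → π b = c → a = b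

/-- `GC` contains a directed cycle all of whose clusters have cardinality 1. -/
def HasSingletonCycle (π : V → C) (GC : MixedGraph C) : Prop :=
  ∃ c, Relation.TransGen
    (fun c₁ c₂ => GC.dir c₁ c₂ ∧ SingletonCluster π c₁ ∧ SingletonCluster π c₂) c c

/-- The canonical compatible graph of `GC` : all bidirected edges between the
relevant clusters; for self-loops all within-cluster edges following the index
order; for each directed edge between distinct clusters the edge from the
first vertex of the source to the last vertex of the target. -/
def canonicalGraph [LinearOrder V] (π : V → C) (GC : MixedGraph C) : MixedGraph V where
  verts := Set.univ
  dir a b :=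
    (π a = π b ∧ GC.dir (π a) (π b) ∧ a < b) ∨
    (π a ≠ π b ∧ GC.dir (π a) (π b) ∧
      IsLeast (clusterOf π (π a)) a ∧ IsGreatest (clusterOf π (π b)) b)
  bi a b := a ≠ b ∧ GC.bi (π a) (π b)
  dir_mem := fun _ _ _ => ⟨trivial, trivial⟩
  bi_mem := fun _ _ _ => ⟨trivial, trivial⟩
  bi_symm := fun _ _ h => ⟨h.1.symm, GC.bi_symm h.2⟩

/-- The unfolded graph of `GC` : the canonical compatible graph together with
all eligible directed edges, i.e. those corresponding to a cluster-level
directed edge whose addition to the canonical graph creates no directed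
cycle. -/
def unfoldedGraph [LinearOrder V] (π : V → C) (GC : MixedGraph C) : MixedGraph V where
  verts := Set.univ
  dir a b := (canonicalGraph π GC).dir a b ∨
    (GC.dir (π a) (π b) ∧ ((canonicalGraph π GC).addDir a b).Acyclic)
  bi a b := (canonicalGraph π GC).bi a b
  dir_mem := fun _ _ _ => ⟨trivial, trivial⟩
  bi_mem := fun _ _ _ => ⟨trivial, trivial⟩
  bi_symm := fun _ _ h => (canonicalGraph π GC).bi_symm h

/-- Failure of rule `i` of Pearl's calculus (atomically) in `G` :
`0` ↦ rule 1, `1` ↦ rule 2, `2` ↦ rule 3. -/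
def RuleFails (G : MixedGraph V) (W X Y Z : Set V) (i : Fin 3) : Prop :=
  if i = 0 then (G.mutilate W ∅).DConnected X Y (W ∪ Z)
  else if i = 1 then (G.mutilate W X).DConnected X Y (W ∪ Z)
  else (G.mutilate (W ∪ (X \ (G.mutilate W ∅).AncSet Z)) ∅).DConnected X Y (W ∪ Z)

end MixedGraph

open MixedGraph

/-! Every cluster-level edge is already realised in `G_can`, and every edge of `G_u` projects
onto an edge of `G^C`; hence any acyclic graph sandwiched between `G_can` and `G_u`, such as
`G_can ∪ σ`, induces exactly `G^C`. Realising the edges in `G_can` needs some compatible graph: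
it shows that the clusters involved are nonempty and that a cluster with a self-loop or a
bidirected self-edge has two distinct vertices. -/

namespace MixedGraph

variable {V C : Type*}

theorem Acyclic.irrefl {G : MixedGraph V} (hG : G.Acyclic) (v : V) : ¬ G.dir v v :=
  fun h => hG h .refl

theorem isSubgraph_union_left (G H : MixedGraph V) : G.IsSubgraph (G.union H) :=
  ⟨Set.subset_union_left, fun _ _ => Or.inl, fun _ _ => Or.inl⟩

theorem IsSubgraph.union {G H K : MixedGraph V} (hG : G.IsSubgraph K) (hH : H.IsSubgraph K) :
    (G.union H).IsSubgraph K :=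
  ⟨Set.union_subset hG.1 hH.1, fun _ _ h => h.elim (hG.2.1 ·) (hH.2.1 ·),
    fun _ _ h => h.elim (hG.2.2 ·) (hH.2.2 ·)⟩

section Cluster

variable [LinearOrder V] (π : V → C) (GC : MixedGraph C)

theorem canonicalGraph_isSubgraph_unfoldedGraph :
    (canonicalGraph π GC).IsSubgraph (unfoldedGraph π GC) :=
  ⟨subset_rfl, fun _ _ => Or.inl, fun _ _ h => h⟩

variable {π GC}

theorem canonicalGraph_dir_map {a b : V} (h : (canonicalGraph π GC).dir a b) :
    GC.dir (π a) (π b) := by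
  rcases h with ⟨_, h, _⟩ | ⟨_, h, _⟩ <;> exact h

theorem unfoldedGraph_dir_map {a b : V} (h : (unfoldedGraph π GC).dir a b) :
    GC.dir (π a) (π b) :=
  h.elim canonicalGraph_dir_map And.left

theorem Compatible.exists_canonicalGraph_dir [Finite V] {G : MixedGraph V}
    (hG : Compatible π GC G) {a b : V} (hab : G.dir a b) :
    ∃ a' b', π a' = π a ∧ π b' = π b ∧ (canonicalGraph π GC).dir a' b' := by
  have hGC : GC.dir (π a) (π b) := (hG.2.2.1 _ _).2 ⟨a, b, rfl, rfl, hab⟩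
  by_cases hc : π a = π b
  · have hne : a ≠ b := fun h => hG.1.2.1 a (h ▸ hab)
    rcases hne.lt_or_gt with hlt | hgt
    · exact ⟨a, b, rfl, rfl, .inl ⟨hc, hGC, hlt⟩⟩
    · exact ⟨b, a, hc.symm, hc, .inl ⟨hc.symm, hc ▸ hc ▸ hGC, hgt⟩⟩
  · obtain ⟨a', ha', ha'_min⟩ :=
      Set.exists_min_image (clusterOf π (π a)) id (Set.toFinite _) ⟨a, rfl⟩
    obtain ⟨b', hb', hb'_max⟩ :=
      Set.exists_max_image (clusterOf π (π b)) id (Set.toFinite _) ⟨b, rfl⟩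
    refine ⟨a', b', ha', hb', .inr ⟨?_, ?_, ?_, ?_⟩⟩
    · rwa [ha', hb']
    · rwa [ha', hb']
    · exact (show π a' = π a from ha') ▸ ⟨ha', ha'_min⟩
    · exact (show π b' = π b from hb') ▸ ⟨hb', hb'_max⟩

theorem Compatible.canonicalGraph_bi {G : MixedGraph V} (hG : Compatible π GC G) {a b : V}
    (hab : G.bi a b) : (canonicalGraph π GC).bi a b :=
  ⟨fun h => hG.1.2.2 a (h ▸ hab), (hG.2.2.2 _ _).2 ⟨a, b, rfl, rfl, hab⟩⟩

theorem compatible_of_isSubgraph_unfoldedGraph [Finite V] (hcomp : ∃ G, Compatible π GC G)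
    {H : MixedGraph V} (hcan : (canonicalGraph π GC).IsSubgraph H)
    (hunf : H.IsSubgraph (unfoldedGraph π GC)) (hH : H.Acyclic) : Compatible π GC H := by
  obtain ⟨G, hG⟩ := hcomp
  refine ⟨⟨hH, hH.irrefl, fun v hv => (hunf.2.2 hv).1 rfl⟩,
    Set.eq_univ_of_univ_subset hcan.1, fun c d => ⟨?_, ?_⟩, fun c d => ⟨?_, ?_⟩⟩
  · intro hcd
    obtain ⟨a, b, rfl, rfl, hab⟩ := (hG.2.2.1 c d).1 hcd
    obtain ⟨a', b', ha', hb', hcan_ab⟩ := hG.exists_canonicalGraph_dir hab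
    exact ⟨a', b', ha', hb', hcan.2.1 hcan_ab⟩
  · rintro ⟨a, b, rfl, rfl, hab⟩
    exact unfoldedGraph_dir_map (hunf.2.1 hab)
  · intro hcd
    obtain ⟨a, b, rfl, rfl, hab⟩ := (hG.2.2.2 c d).1 hcd
    exact ⟨a, b, rfl, rfl, hcan.2.2 (hG.canonicalGraph_bi hab)⟩
  · rintro ⟨a, b, rfl, rfl, hab⟩
    exact (hunf.2.2 hab).2

end Cluster

end MixedGraph

theorem stmt11_general {V C : Type} [Fintype V] [LinearOrder V]
    (π : V → C)
    (GC : MixedGraph C)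
    (hne : ∃ G : MixedGraph V, MixedGraph.Compatible π GC G)
    (σ : MixedGraph V)
    (hsub : σ.IsSubgraph (MixedGraph.unfoldedGraph π GC))
    (hacyc : ((MixedGraph.canonicalGraph π GC).union σ).Acyclic) :
    MixedGraph.Compatible π GC ((MixedGraph.canonicalGraph π GC).union σ) :=
  compatible_of_isSubgraph_unfoldedGraph hne (isSubgraph_union_left _ σ)
    ((canonicalGraph_isSubgraph_unfoldedGraph π GC).union hsub) hacyc

/-- If `σ` is a structure of interest inside the unfolded
graph and `G_can ∪ σ` is acyclic, then `G_can ∪ σ` is an ADMG compatible with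
`G^C`. -/
theorem stmt11 {V C : Type} [Fintype V] [LinearOrder V]
    (π : V → C) (hπ : Function.Surjective π)
    (GC : MixedGraph C) (hGCverts : GC.verts = Set.univ)
    (hne : ∃ G : MixedGraph V, MixedGraph.Compatible π GC G)
    (σ : MixedGraph V) (hσ : σ.IsSOI)
    (hsub : σ.IsSubgraph (MixedGraph.unfoldedGraph π GC))
    (hacyc : ((MixedGraph.canonicalGraph π GC).union σ).Acyclic) :
    MixedGraph.Compatible π GC ((MixedGraph.canonicalGraph π GC).union σ) :=
  stmt11_general π GC hne σ hsub hacyc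
end

section
/- Let G be a mixed graph and let X, Y, Z be pairwise disjoint subsets of its vertices. Let σ be a structure of interest that is a subgraph of G and connects X and Y under Z. Then there exists a structure of interest σ' that is a subgraph of σ, connects X and Y under Z, and satisfies |σ' ∩ X| = 1 and |σ' ∩ Y| = 1 (σ' contains exactly one vertex of X and exactly one vertex of Y). -/
open MixedGraph

/-! Choose a connecting substructure `H ⊆ σ` with as few edges as possible. Cutting the edges
between two adjacent vertices of `H`, the component of a vertex `y ∈ Y` is again a structure of
interest; if it still meets `X`, it can only fail to connect because the cut created a new root,
so the cut edge is forced: it is the only edge `a → b` out of some `a ∉ X ∪ Y ∪ Z`.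

If `H` met `X` in `x₁ ≠ x₂`, run along a simple path `x₁ = p₀, …, pₖ = x₂`. The component of `y`
after cutting `pᵢpᵢ₊₁` contains `x₁` or `x₂`, so the edge is forced; it cannot be forced as
`pᵢ → pᵢ₊₁`, since `p₀ = x₁ ∈ X` and, inductively, the only edge out of `pᵢ` goes back to
`pᵢ₋₁`. Hence every `pᵢ₊₁` lies outside `X`, which fails at `pₖ = x₂`. -/

theorem Relation.ReflTransGen.exists_injOn_chain {α : Type*} {r : α → α → Prop} [Std.Symm r]
    {a b : α} (h : Relation.ReflTransGen r a b) :
    ∃ (k : ℕ) (p : ℕ → α), p 0 = a ∧ p k = b ∧ (∀ i < k, r (p i) (p (i + 1))) ∧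
      Set.InjOn p (Set.Iic k) := by
  classical
  have hreach : (SimpleGraph.fromRel r).Reachable a b := by
    rw [SimpleGraph.reachable_iff_reflTransGen]
    induction h with
    | refl => rfl
    | @tail c d _ hcd ih =>
      by_cases hc : c = d
      · exact hc ▸ ih
      · exact ih.tail ((SimpleGraph.fromRel_adj r c d).2 ⟨hc, Or.inl hcd⟩)
  obtain ⟨w⟩ := hreach
  refine ⟨w.bypass.length, w.bypass.getVert, w.bypass.getVert_zero, w.bypass.getVert_length,
    fun i hi => ?_, w.bypass_isPath.getVert_injOn⟩
  obtain ⟨-, h | h⟩ := w.bypass.adj_getVert_succ hi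
  exacts [h, symm h]

theorem Relation.ReflTransGen.of_chain {α : Type*} {r : α → α → Prop} {p : ℕ → α} {m n : ℕ}
    (hmn : m ≤ n) (h : ∀ i, m ≤ i → i < n → r (p i) (p (i + 1))) :
    Relation.ReflTransGen r (p m) (p n) :=
  (reflTransGen_of_succ_of_le (fun i j => r (p i) (p j))
    (fun i hi => by simpa using h i hi.1 hi.2) hmn).lift p fun _ _ => id

namespace MixedGraph

open Relation

variable {V : Type*} {σ τ H : MixedGraph V} {X Y Z : Set V} {a b c d u v w y : V}

instance (H : MixedGraph V) : Std.Symm H.Adj where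
  symm _ _ h := by
    rcases h with h | h | h
    exacts [Or.inr (Or.inl h), Or.inl h, Or.inr (Or.inr (H.bi_symm h))]

theorem Adj.right_mem (h : H.Adj a b) : b ∈ H.verts := by
  rcases h with h | h | h
  exacts [(H.dir_mem h).2, (H.dir_mem h).1, (H.bi_mem h).2]

theorem mem_verts_of_reflTransGen (hu : u ∈ H.verts) (h : ReflTransGen H.Adj u v) :
    v ∈ H.verts := by
  induction h with
  | refl => exact hu
  | tail _ hab _ => exact hab.right_mem

theorem isSubgraph_refl (H : MixedGraph V) : H.IsSubgraph H :=
  ⟨subset_rfl, fun _ _ h => h, fun _ _ h => h⟩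

theorem IsSubgraph.trans (h₁ : τ.IsSubgraph H) (h₂ : H.IsSubgraph σ) : τ.IsSubgraph σ :=
  ⟨h₁.1.trans h₂.1, fun _ _ h => h₂.2.1 (h₁.2.1 h), fun _ _ h => h₂.2.2 (h₁.2.2 h)⟩

theorem IsSubgraph.adj (hτ : τ.IsSubgraph H) (h : τ.Adj a b) : H.Adj a b := by
  rcases h with h | h | h
  exacts [Or.inl (hτ.2.1 h), Or.inr (Or.inl (hτ.2.1 h)), Or.inr (Or.inr (hτ.2.2 h))]

theorem IsSOI.of_isSubgraph (hσ : σ.IsSOI) (hτ : τ.IsSubgraph σ) (hconn : τ.Connected) :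
    τ.IsSOI := by
  obtain ⟨⟨hacyc, hdir, hbi⟩, -, hout⟩ := hσ
  refine ⟨⟨fun a b hab hba => hacyc (hτ.2.1 hab)
      (ReflTransGen.mono (fun _ _ h => hτ.2.1 h) _ _ hba),
    fun v h => hdir v (hτ.2.1 h), fun v h => hbi v (hτ.2.2 h)⟩, hconn, fun v hv => ?_⟩
  rcases hout v (hτ.1 hv) with hone | ⟨⟨w₁, w₂, hne, -, -, htwo⟩, hin, hbi'⟩
  · exact Or.inl fun _ _ h₁ h₂ => hone (hτ.2.1 h₁) (hτ.2.1 h₂)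
  by_cases hboth : τ.dir v w₁ ∧ τ.dir v w₂
  · exact Or.inr ⟨⟨w₁, w₂, hne, hboth.1, hboth.2, fun w hw => htwo w (hτ.2.1 hw)⟩,
      fun w hw => hin w (hτ.2.1 hw), fun w hw => hbi' w (hτ.2.2 hw)⟩
  refine Or.inl fun a b ha hb => ?_
  rcases htwo a (hτ.2.1 ha) with rfl | rfl <;> rcases htwo b (hτ.2.1 hb) with rfl | rfl <;>
    tauto

theorem Connects.symm (h : σ.Connects X Y Z) : σ.Connects Y X Z :=
  ⟨h.2.1, h.1, Set.union_comm X Y ▸ h.2.2.1, h.2.2.2⟩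

def sever (H : MixedGraph V) (c d : V) : MixedGraph V where
  verts := H.verts
  dir a b := H.dir a b ∧ s(a, b) ≠ s(c, d)
  bi a b := H.bi a b ∧ s(a, b) ≠ s(c, d)
  dir_mem _ _ h := H.dir_mem h.1
  bi_mem _ _ h := H.bi_mem h.1
  bi_symm _ _ h := ⟨H.bi_symm h.1, Sym2.eq_swap ▸ h.2⟩

theorem sever_isSubgraph : (H.sever c d).IsSubgraph H :=
  ⟨subset_rfl, fun _ _ h => h.1, fun _ _ h => h.1⟩

theorem sever_adj : (H.sever c d).Adj a b ↔ H.Adj a b ∧ s(a, b) ≠ s(c, d) := by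
  simp only [Adj, sever, Sym2.eq_swap (a := b)]
  tauto

theorem reflTransGen_sever (h : ReflTransGen H.Adj u v) :
    ReflTransGen (H.sever c d).Adj u v ∨ ReflTransGen (H.sever c d).Adj u c ∨
      ReflTransGen (H.sever c d).Adj u d := by
  induction h with
  | refl => exact Or.inl .refl
  | @tail a b _ hab ih =>
    rcases ih with h | h | h
    · by_cases hcut : s(a, b) = s(c, d)
      · rcases Sym2.eq_iff.1 hcut with ⟨rfl, -⟩ | ⟨rfl, -⟩
        exacts [Or.inr (Or.inl h), Or.inr (Or.inr h)]
      · exact Or.inl (h.tail (sever_adj.2 ⟨hab, hcut⟩))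
    · exact Or.inr (Or.inl h)
    · exact Or.inr (Or.inr h)

def component (H : MixedGraph V) (v : V) : MixedGraph V where
  verts := {w | ReflTransGen H.Adj v w}
  dir a b := H.dir a b ∧ ReflTransGen H.Adj v a
  bi a b := H.bi a b ∧ ReflTransGen H.Adj v a
  dir_mem _ _ h := ⟨h.2, h.2.tail (Or.inl h.1)⟩
  bi_mem _ _ h := ⟨h.2, h.2.tail (Or.inr (Or.inr h.1))⟩
  bi_symm _ _ h := ⟨H.bi_symm h.1, h.2.tail (Or.inr (Or.inr h.1))⟩

theorem component_isSubgraph (hv : v ∈ H.verts) : (H.component v).IsSubgraph H :=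
  ⟨fun _ hw => mem_verts_of_reflTransGen hv hw, fun _ _ h => h.1, fun _ _ h => h.1⟩

theorem reflTransGen_component (h : ReflTransGen H.Adj v w) :
    ReflTransGen (H.component v).Adj v w := by
  induction h with
  | refl => rfl
  | tail hva hab ih =>
    refine ih.tail ?_
    rcases hab with h | h | h
    exacts [Or.inl ⟨h, hva⟩, Or.inr (Or.inl ⟨h, hva.tail (Or.inr (Or.inl h))⟩),
      Or.inr (Or.inr ⟨h, hva⟩)]

theorem component_connected : (H.component v).Connected :=
  ⟨⟨v, .refl⟩, fun _ ha _ hb =>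
    (symm (reflTransGen_component ha)).trans (reflTransGen_component hb)⟩

-- A bidirected edge is counted once per orientation.
noncomputable def edgeCount (H : MixedGraph V) : ℕ :=
  {e : V × V | H.dir e.1 e.2}.ncard + {e : V × V | H.bi e.1 e.2}.ncard

theorem edgeCount_lt [Finite V] (hτ : τ.IsSubgraph H) (hcd : H.Adj c d) (hτcd : ¬ τ.Adj c d) :
    τ.edgeCount < H.edgeCount := by
  have hdir : {e : V × V | τ.dir e.1 e.2} ⊆ {e | H.dir e.1 e.2} := fun _ h => hτ.2.1 h
  have hbi : {e : V × V | τ.bi e.1 e.2} ⊆ {e | H.bi e.1 e.2} := fun _ h => hτ.2.2 h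
  have hlt : {e : V × V | τ.dir e.1 e.2} ⊂ {e | H.dir e.1 e.2} ∨
      {e : V × V | τ.bi e.1 e.2} ⊂ {e | H.bi e.1 e.2} := by
    rcases hcd with h | h | h
    · exact Or.inl ((Set.ssubset_iff_of_subset hdir).2 ⟨(c, d), h, fun h' => hτcd (Or.inl h')⟩)
    · exact Or.inl ((Set.ssubset_iff_of_subset hdir).2
        ⟨(d, c), h, fun h' => hτcd (Or.inr (Or.inl h'))⟩)
    · exact Or.inr ((Set.ssubset_iff_of_subset hbi).2
        ⟨(c, d), h, fun h' => hτcd (Or.inr (Or.inr h'))⟩)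
  rcases hlt with h | h
  · exact add_lt_add_of_lt_of_le (Set.ncard_lt_ncard h) (Set.ncard_le_ncard hbi)
  · exact add_lt_add_of_le_of_lt (Set.ncard_le_ncard hdir) (Set.ncard_lt_ncard h)

def IsEdgeMinimal (X Y Z : Set V) (H : MixedGraph V) : Prop :=
  ∀ τ : MixedGraph V, τ.IsSOI → τ.IsSubgraph H → τ.Connects X Y Z →
    ∀ ⦃c d : V⦄, H.Adj c d → τ.Adj c d

theorem IsEdgeMinimal.symm (h : H.IsEdgeMinimal X Y Z) : H.IsEdgeMinimal Y X Z :=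
  fun τ hτ hτH hτc => h τ hτ hτH hτc.symm

theorem exists_isEdgeMinimal [Finite V] (hσ : σ.IsSOI) (hc : σ.Connects X Y Z) :
    ∃ H : MixedGraph V, H.IsSOI ∧ H.IsSubgraph σ ∧ H.Connects X Y Z ∧
      H.IsEdgeMinimal X Y Z := by
  obtain ⟨H, ⟨hH, hHσ, hHc⟩, hmin⟩ := (measure edgeCount).wf.has_min
    {τ | τ.IsSOI ∧ τ.IsSubgraph σ ∧ τ.Connects X Y Z} ⟨σ, hσ, isSubgraph_refl σ, hc⟩
  refine ⟨H, hH, hHσ, hHc, fun τ hτ hτH hτc c d hcd => ?_⟩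
  by_contra hτcd
  exact hmin τ ⟨hτ, hτH.trans hHσ, hτc⟩ (edgeCount_lt hτH hcd hτcd)

theorem IsEdgeMinimal.exists_forced_dir (hmin : H.IsEdgeMinimal X Y Z) (hH : H.IsSOI)
    (hc : H.Connects X Y Z) (hcd : H.Adj c d) (hy : y ∈ H.verts)
    (hX : ∃ x ∈ X, ReflTransGen (H.sever c d).Adj y x)
    (hY : ∃ y' ∈ Y, ReflTransGen (H.sever c d).Adj y y') :
    ∃ a b, s(a, b) = s(c, d) ∧ a ∉ X ∪ Y ∪ Z ∧ H.dir a b ∧ ∀ w, H.dir a w → w = b := by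
  set τ := (H.sever c d).component y
  have hτsever : τ.IsSubgraph (H.sever c d) := component_isSubgraph (H := H.sever c d) hy
  have hτH : τ.IsSubgraph H := hτsever.trans sever_isSubgraph
  have hτc : ¬ τ.Connects X Y Z := fun hτc =>
    (sever_adj.1 (hτsever.adj
      (hmin τ (hH.of_isSubgraph hτH component_connected) hτH hτc hcd))).2 rfl
  obtain ⟨a, ha, haXYZ⟩ : ∃ a ∈ τ.roots, a ∉ X ∪ Y ∪ Z := by
    by_contra! hroots
    obtain ⟨x, hxX, hx⟩ := hX
    obtain ⟨y', hy'Y, hy'⟩ := hY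
    refine hτc ⟨⟨x, hx, hxX⟩, ⟨y', hy', hy'Y⟩, hroots, fun v hv hnr => ?_⟩
    obtain ⟨w, hw⟩ : ∃ w, τ.dir v w := by
      by_contra! h
      exact hnr ⟨hv, h⟩
    exact hc.2.2.2 v (hτH.1 hv) fun hr => hr.2 w (hτH.2.1 hw)
  obtain ⟨b, hab⟩ : ∃ b, H.dir a b := by
    by_contra! h
    exact haXYZ (hc.2.2.1 ⟨hτH.1 ha.1, h⟩)
  have hcut : ∀ w, H.dir a w → s(a, w) = s(c, d) := fun w hw => by
    by_contra hne
    exact ha.2 w ⟨⟨hw, hne⟩, ha.1⟩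
  exact ⟨a, b, hcut b hab, haXYZ, hab,
    fun w hw => Sym2.congr_right.1 ((hcut w hw).trans (hcut b hab).symm)⟩

theorem sever_adj_of_injOn {p : ℕ → V} {k i j : ℕ} (hstep : ∀ i < k, H.Adj (p i) (p (i + 1)))
    (hinj : Set.InjOn p (Set.Iic k)) (hi : i < k) (hj : j < k) (hji : j ≠ i) :
    (H.sever (p i) (p (i + 1))).Adj (p j) (p (j + 1)) := by
  have inj : ∀ {m n}, m ≤ k → n ≤ k → p m = p n → m = n := fun hm hn h => hinj hm hn h
  refine sever_adj.2 ⟨hstep j hj, fun h => ?_⟩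
  rcases Sym2.eq_iff.1 h with ⟨h, -⟩ | ⟨h, h'⟩
  · exact hji (inj (by omega) (by omega) h)
  · have := inj (by omega) (by omega) h
    have := inj (by omega) (by omega) h'
    omega

theorem IsEdgeMinimal.exists_forced_dir_of_injOn (hmin : H.IsEdgeMinimal X Y Z) (hH : H.IsSOI)
    (hc : H.Connects X Y Z) {p : ℕ → V} {k i : ℕ} (hp0 : p 0 ∈ H.verts ∩ X) (hpk : p k ∈ X)
    (hstep : ∀ i < k, H.Adj (p i) (p (i + 1))) (hinj : Set.InjOn p (Set.Iic k)) (hi : i < k) :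
    ∃ a b, s(a, b) = s(p i, p (i + 1)) ∧ a ∉ X ∪ Y ∪ Z ∧ H.dir a b ∧
      ∀ w, H.dir a w → w = b := by
  obtain ⟨y, hy, hyY⟩ := hc.2.1
  have hx : ∃ x ∈ X, ReflTransGen (H.sever (p i) (p (i + 1))).Adj y x := by
    rcases reflTransGen_sever (hH.2.1.2 y hy _ hp0.1) with h | h | h
    · exact ⟨p 0, hp0.2, h⟩
    · exact ⟨p 0, hp0.2, h.trans (_root_.symm (ReflTransGen.of_chain (Nat.zero_le i)
        fun j _ hj => sever_adj_of_injOn hstep hinj hi (by omega) (by omega)))⟩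
    · exact ⟨p k, hpk, h.trans (ReflTransGen.of_chain hi
        fun j hj hjk => sever_adj_of_injOn hstep hinj hi hjk (by omega))⟩
  exact hmin.exists_forced_dir hH hc (hstep i hi) hy hx ⟨y, hyY, .refl⟩

theorem IsEdgeMinimal.subsingleton_inter (hmin : H.IsEdgeMinimal X Y Z) (hH : H.IsSOI)
    (hc : H.Connects X Y Z) : (H.verts ∩ X).Subsingleton := by
  rintro x₁ hx₁ x₂ ⟨hx₂, hx₂X⟩
  by_contra hne
  obtain ⟨k, p, rfl, rfl, hstep, hinj⟩ := (hH.2.1.2 _ hx₁.1 _ hx₂).exists_injOn_chain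
  have forced (i : ℕ) (hi : i < k) := hmin.exists_forced_dir_of_injOn hH hc hx₁ hx₂X hstep hinj hi
  have back (i : ℕ) (hi : i < k) :
      p (i + 1) ∉ X ∪ Y ∪ Z ∧ ∀ w, H.dir (p (i + 1)) w → w = p i := by
    induction i with
    | zero =>
      obtain ⟨a, b, hab, ha, -, hsole⟩ := forced 0 hi
      rcases Sym2.eq_iff.1 hab with ⟨rfl, -⟩ | ⟨rfl, rfl⟩
      · exact absurd (Or.inl (Or.inl hx₁.2)) ha
      · exact ⟨ha, hsole⟩
    | succ j ih =>
      obtain ⟨a, b, hab, ha, hdir, hsole⟩ := forced (j + 1) hi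
      rcases Sym2.eq_iff.1 hab with ⟨rfl, rfl⟩ | ⟨rfl, rfl⟩
      · have : j + 2 = j :=
          hinj (Set.mem_Iic.2 (by omega)) (Set.mem_Iic.2 (by omega)) ((ih (by omega)).2 _ hdir)
        omega
      · exact ⟨ha, hsole⟩
  obtain ⟨k, rfl⟩ : ∃ k', k = k' + 1 := Nat.exists_eq_succ_of_ne_zero fun hk => hne (by rw [hk])
  exact (back k (by omega)).1 (Or.inl (Or.inl hx₂X))

end MixedGraph

theorem stmt15_general {V : Type} [Fintype V]
    (X Y Z : Set V)
    (σ : MixedGraph V) (hσ : σ.IsSOI)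
    (hconn : σ.Connects X Y Z) :
    ∃ σ' : MixedGraph V, σ'.IsSOI ∧ σ'.IsSubgraph σ ∧ σ'.Connects X Y Z ∧
      (∃ x, σ'.verts ∩ X = {x}) ∧ (∃ y, σ'.verts ∩ Y = {y}) := by
  obtain ⟨H, hH, hHσ, hHc, hmin⟩ := exists_isEdgeMinimal hσ hconn
  refine ⟨H, hH, hHσ, hHc, ?_, ?_⟩
  · exact Set.exists_eq_singleton_iff_nonempty_subsingleton.2
      ⟨hHc.1, hmin.subsingleton_inter hH hHc⟩
  · exact Set.exists_eq_singleton_iff_nonempty_subsingleton.2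
      ⟨hHc.2.1, hmin.symm.subsingleton_inter hH hHc.symm⟩

/-- A connecting structure of interest can be replaced by a
connecting substructure meeting `X` and `Y` in exactly one vertex each. -/
theorem stmt15 {V : Type} [Fintype V] (G : MixedGraph V)
    (X Y Z : Set V) (hXV : X ⊆ G.verts) (hYV : Y ⊆ G.verts) (hZV : Z ⊆ G.verts)
    (hXY : Disjoint X Y) (hXZ : Disjoint X Z) (hYZ : Disjoint Y Z)
    (σ : MixedGraph V) (hσ : σ.IsSOI) (hsub : σ.IsSubgraph G)
    (hconn : σ.Connects X Y Z) :
    ∃ σ' : MixedGraph V, σ'.IsSOI ∧ σ'.IsSubgraph σ ∧ σ'.Connects X Y Z ∧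
      (∃ x, σ'.verts ∩ X = {x}) ∧ (∃ y, σ'.verts ∩ Y = {y}) :=
  stmt15_general X Y Z σ hσ hconn
end
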